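/- Let φ be a lower semicontinuous submeasure on ℕ such that Exh(φ) = Fin(φ), i.e. for every A ⊆ ℕ: φ(A \ [0,N)) → 0 as N → ∞ if and only if φ(A) < ∞; let J = Exh(φ) and assume J is tall (every infinite subset of ℕ contains an infinite element of J). If J is representable in c₀ (there exists h : ℕ → c₀ such that for every A ⊆ ℕ, A ∈ J iff ∑_{n∈A} h(n) converges unconditionally in c₀), then J is a summable ideal: there exists g : ℕ → [0,∞) such that for every A ⊆ ℕ, A ∈ J iff ∑_{n∈A} g(n) < ∞. (A tall F_σ P-ideal is representable in c₀ iff it is a summable ideal.) -/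

import Mathlib

/-!
Write `a n k = |h n k|`, let `μ_k` be the measure on `ℕ` with weights `a · k` (the `k`-th column of
the matrix) and `ν = sup_k μ_k`. Splitting a finite set of rows by the sign of the `k`-th
coordinate shows that `∑_{n ∈ A} h n` converges unconditionally in `c₀` iff `ν (A \ [0, N)) → 0`,
so `J = Exh(ν)`. The weights are `g n = ∑_k 2⁻ᵏ a n k`, for which `∑_{n ∈ A} g n = ∑_k 2⁻ᵏ μ_k A`.
If `A ∈ J` then `ν A < ∞`, so this sum is finite.

Conversely, suppose every `μ_k A` is finite. As `Exh(ν) = Fin(φ)` with `φ` lower semicontinuous,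
some `δ > 0` has `{ν ≤ δ} ⊆ J`, and tallness forces `‖h n‖ → 0`. If `ν (A \ [0, N)) > ε` for every
`N`, there are finite blocks of `A` arbitrarily far out, each with mass `> ε` in some column but
`≤ ε + δ/5` in every column. Each column of `A` has finite mass, so in any fixed column the blocks
eventually become light. A gliding hump selection therefore yields a subsequence of blocks whose
union `C` has `ν C ≤ δ`. Then `C ∈ J`, although every tail of `C` still contains a block with
`ν > ε`.
-/

open Filter Topology MeasureTheory Set
open scoped ENNReal ZeroAtInfty

theorem summable_iff_vanishing_enorm {ι E : Type*} [NormedAddCommGroup E] [CompleteSpace E]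
    {f : ι → E} :
    Summable f ↔ ∀ ε > 0, ∃ s : Finset ι, ∀ t, Disjoint t s → ‖∑ i ∈ t, f i‖ₑ ≤ ε := by
  rw [summable_iff_cauchySeq_finset, cauchySeq_finset_iff_sum_vanishing,
    Metric.nhds_basis_closedEBall.forall_iff]
  · simp [edist_zero_right]
  · rintro s t hst ⟨s', hs'⟩
    exact ⟨s', fun t' ht' => hst <| hs' _ ht'⟩

theorem sum_enorm_le_two_mul_of_forall_subset {ι : Type*} (t : Finset ι) (x : ι → ℝ) {c : ℝ≥0∞}
    (hc : ∀ u ⊆ t, ‖∑ n ∈ u, x n‖ₑ ≤ c) : ∑ n ∈ t, ‖x n‖ₑ ≤ 2 * c := by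
  have sum_enorm_of_nonneg : ∀ (u : Finset ι) (y : ι → ℝ), (∀ n ∈ u, 0 ≤ y n) →
      ∑ n ∈ u, ‖y n‖ₑ = ‖∑ n ∈ u, y n‖ₑ := fun u y hy => by
    rw [Real.enorm_of_nonneg (Finset.sum_nonneg hy), ENNReal.ofReal_sum_of_nonneg hy]
    exact Finset.sum_congr rfl fun n hn => Real.enorm_of_nonneg (hy n hn)
  rw [← Finset.sum_filter_add_sum_filter_not t (0 ≤ x ·), two_mul]
  refine add_le_add ?_ ?_
  · rw [sum_enorm_of_nonneg _ _ fun n hn => (Finset.mem_filter.mp hn).2]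
    exact hc _ (Finset.filter_subset _ _)
  · have hneg := sum_enorm_of_nonneg (t.filter (¬ 0 ≤ x ·)) (- x ·)
      fun n hn => (neg_pos.mpr (not_le.mp (Finset.mem_filter.mp hn).2)).le
    simp only [enorm_neg, Finset.sum_neg_distrib] at hneg
    rw [hneg]
    exact hc _ (Finset.filter_subset _ _)

theorem Finset.exists_subset_lt_sum_and_forall_sum_le {ι κ : Type*} [DecidableEq ι]
    {a : ι → κ → ℝ≥0∞} {ε β : ℝ≥0∞} (hβ : β ≠ ⊤) (F : Finset ι) (ha : ∀ n ∈ F, ∀ k, a n k ≤ β)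
    (hF : ∃ k, ε < ∑ n ∈ F, a n k) :
    ∃ H ⊆ F, (∃ k, ε < ∑ n ∈ H, a n k) ∧ ∀ k, ∑ n ∈ H, a n k ≤ ε + β := by
  -- Drop elements while some column sum exceeds `ε + β`: each entry is `≤ β`, so that column
  -- sum stays above `ε`.
  induction F using Finset.strongInduction with
  | H F ih =>
    by_cases hall : ∀ k, ∑ n ∈ F, a n k ≤ ε + β
    · exact ⟨F, subset_rfl, hF, hall⟩
    obtain ⟨k, hk⟩ := not_forall.mp hall
    obtain ⟨n₀, hn₀⟩ : F.Nonempty := Finset.nonempty_of_sum_ne_zero (ne_bot_of_gt (not_le.mp hk))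
    have hn₀β := ha n₀ hn₀ k
    have herase : ε < ∑ n ∈ F.erase n₀, a n k := by
      rw [← Finset.sum_erase_add _ _ hn₀] at hk
      refine (ENNReal.add_lt_add_iff_right (ne_top_of_le_ne_top hβ hn₀β)).mp ?_
      exact (add_le_add le_rfl hn₀β).trans_lt (not_le.mp hk)
    obtain ⟨H, hHF, hH⟩ := ih _ (Finset.erase_ssubset hn₀)
      (fun n hn => ha n (Finset.mem_of_mem_erase hn)) ⟨k, herase⟩
    exact ⟨H, hHF.trans (Finset.erase_subset _ _), hH⟩

theorem tendsto_zero_of_forall_infinite_exists_summable {E : Type*} [NormedAddCommGroup E]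
    {f : ℕ → E} (hf : ∀ B : Set ℕ, B.Infinite → ∃ C ⊆ B, C.Infinite ∧ Summable (fun n : C => f n)) :
    Tendsto f atTop (𝓝 0) := by
  refine Metric.tendsto_atTop.mpr fun r hr => ?_
  by_contra! hfreq
  have hinf : {n | r ≤ ‖f n‖}.Infinite := Nat.frequently_atTop_iff_infinite.mp <|
    frequently_atTop.mpr fun N => by simpa [dist_zero_right] using hfreq N
  obtain ⟨C, hCB, hCinf, hC⟩ := hf _ hinf
  have : Infinite C := hCinf.to_subtype
  obtain ⟨n, hn⟩ := (hC.tendsto_cofinite_zero.eventually (Metric.ball_mem_nhds 0 hr)).exists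
  exact (hCB n.2).not_gt (by simpa using hn)

theorem ZeroAtInftyContinuousMap.enorm_eq_iSup_enorm {α β : Type*} [TopologicalSpace α]
    [SeminormedAddCommGroup β] (f : C₀(α, β)) : ‖f‖ₑ = ⨆ x, ‖f x‖ₑ := by
  rw [← ofReal_norm, ← norm_toBCF_eq_norm, ofReal_norm]
  exact f.toBCF.enorm_eq_iSup_enorm

theorem ZeroAtInftyContinuousMap.finset_sum_apply {ι α β : Type*} [TopologicalSpace α]
    [TopologicalSpace β] [AddCommMonoid β] [ContinuousAdd β] (t : Finset ι) (f : ι → C₀(α, β))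
    (x : α) : (∑ i ∈ t, f i) x = ∑ i ∈ t, f i x :=
  map_sum ({ toFun := fun g => g x, map_zero' := rfl, map_add' := fun _ _ => rfl } : C₀(α, β) →+ β)
    f t

theorem ZeroAtInftyContinuousMap.tendsto_enorm_atTop {β : Type*} [NormedAddCommGroup β]
    (f : C₀(ℕ, β)) : Tendsto (fun k => ‖f k‖ₑ) atTop (𝓝 0) := by
  have := f.zero_at_infty'
  rw [cocompact_eq_cofinite, Nat.cofinite_eq_atTop] at this
  simpa using this.enorm

theorem measure_iUnion_le_of_forall_lt_imp_le {α : Type*} [MeasurableSpace α] (μ : Measure α)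
    {B V : ℕ → Set α} {γ η : ℝ≥0∞} (hV : Monotone V) (hBV : ∀ r, B r ⊆ V r)
    (hB : ∀ r, μ (B r) ≤ γ) (hnext : ∀ r, η < μ (V r) → μ (B (r + 1)) ≤ 2⁻¹ ^ r * η) :
    μ (⋃ r, B r) ≤ η + γ + 2 * η := by
  by_cases hD : ∃ r, η < μ (V r)
  swap
  · push Not at hD
    calc μ (⋃ r, B r) ≤ μ (⋃ r, V r) := measure_mono (iUnion_mono hBV)
      _ = ⨆ r, μ (V r) := hV.measure_iUnion
      _ ≤ η + γ + 2 * η := (iSup_le hD).trans (le_add_right le_self_add)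
  -- Split at the first `r₀` with `η < μ (V r₀)`: earlier blocks lie in `V (r₀ - 1)`, later ones
  -- are geometrically small.
  set r₀ := Nat.find hD
  have hprefix : μ (⋃ r < r₀, B r) ≤ η := by
    rcases Nat.eq_zero_or_pos r₀ with h0 | hpos
    · simp [h0]
    · have : ⋃ r < r₀, B r ⊆ V (r₀ - 1) :=
        iUnion₂_subset fun r hr => (hBV r).trans (hV (by omega))
      exact (measure_mono this).trans (not_lt.mp (Nat.find_min hD (by omega)))
  have htail : μ (⋃ j, B (j + r₀ + 1)) ≤ 2 * η := by
    refine (measure_iUnion_le _).trans ?_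
    calc ∑' j, μ (B (j + r₀ + 1)) ≤ ∑' j, 2⁻¹ ^ j * η := by
          refine ENNReal.tsum_le_tsum fun j => ?_
          have hj : η < μ (V (j + r₀)) :=
            (Nat.find_spec hD).trans_le (measure_mono (hV le_add_self))
          refine (hnext _ hj).trans (mul_le_mul_left ?_ η)
          exact pow_le_pow_right_of_le_one' (ENNReal.inv_le_one.mpr one_le_two) le_self_add
      _ = 2 * η := by rw [ENNReal.tsum_mul_right, ENNReal.tsum_geometric_two]
  have hcover : ⋃ r, B r ⊆ (⋃ r < r₀, B r) ∪ B r₀ ∪ ⋃ j, B (j + r₀ + 1) := by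
    refine iUnion_subset fun r => ?_
    rcases lt_trichotomy r r₀ with hr | rfl | hr
    · refine subset_union_of_subset_left (subset_union_of_subset_left ?_ _) _
      exact subset_iUnion₂ (s := fun r (_ : r < r₀) => B r) r hr
    · exact subset_union_of_subset_left subset_union_right _
    · refine subset_union_of_subset_right ?_ _
      exact (subset_of_eq (by congr 1; omega)).trans (subset_iUnion _ (r - r₀ - 1))
  calc μ (⋃ r, B r) ≤ μ ((⋃ r < r₀, B r) ∪ B r₀ ∪ ⋃ j, B (j + r₀ + 1)) := measure_mono hcover
    _ ≤ μ (⋃ r < r₀, B r) + μ (B r₀) + μ (⋃ j, B (j + r₀ + 1)) :=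
        (measure_union_le _ _).trans (add_le_add_left (measure_union_le _ _) _)
    _ ≤ η + γ + 2 * η := add_le_add (add_le_add hprefix (hB r₀)) htail

def MemExh (ψ : Set ℕ → ℝ≥0∞) (A : Set ℕ) : Prop :=
  Tendsto (fun N => ψ (A \ Iio N)) atTop (𝓝 0)

theorem memExh_iff_forall_exists_le {ψ : Set ℕ → ℝ≥0∞} (hψ : Monotone ψ) (A : Set ℕ) :
    MemExh ψ A ↔ ∀ ε > 0, ∃ N, ψ (A \ Iio N) ≤ ε :=
  ENNReal.tendsto_atTop_zero_iff_le_of_antitone fun _ _ hMN =>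
    hψ (sdiff_subset_sdiff_right (Iio_subset_Iio hMN))

theorem memExh_congr_of_le {ψ₁ ψ₂ : Set ℕ → ℝ≥0∞} {c : ℝ≥0∞} (hc : c ≠ ⊤)
    (h₁₂ : ∀ S, ψ₁ S ≤ ψ₂ S) (h₂₁ : ∀ S, ψ₂ S ≤ c * ψ₁ S) (A : Set ℕ) :
    MemExh ψ₁ A ↔ MemExh ψ₂ A := by
  refine ⟨fun h => ?_, fun h => ?_⟩
  · have hc0 : Tendsto (fun N => c * ψ₁ (A \ Iio N)) atTop (𝓝 0) := by
      simpa using ENNReal.Tendsto.const_mul h (Or.inr hc)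
    exact tendsto_of_tendsto_of_tendsto_of_le_of_le tendsto_const_nhds hc0
      (fun _ => zero_le) fun _ => h₂₁ _
  · exact tendsto_of_tendsto_of_tendsto_of_le_of_le tendsto_const_nhds h
      (fun _ => zero_le) fun _ => h₁₂ _

theorem exists_pos_forall_lt_of_not_memExh {ψ : Set ℕ → ℝ≥0∞} (hψ : Monotone ψ) {A : Set ℕ}
    (hA : ¬ MemExh ψ A) : ∃ ε > 0, ∀ N, ε < ψ (A \ Iio N) := by
  simpa [memExh_iff_forall_exists_le hψ] using hA

theorem memExh_of_measure_ne_top (μ : Measure ℕ) {A : Set ℕ} (hA : μ A ≠ ⊤) : MemExh μ A := by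
  have hempty : (⋂ N, A \ Iio N) = ∅ :=
    eq_empty_of_forall_notMem fun n hn => (mem_iInter.mp hn (n + 1)).2 (Nat.lt_succ_self n)
  have := tendsto_measure_iInter_atTop (μ := μ)
    (fun _ => MeasurableSet.of_discrete.nullMeasurableSet)
    (fun _ _ hMN => sdiff_subset_sdiff_right (Iio_subset_Iio hMN)) ⟨0, by simpa using hA⟩
  rwa [hempty, measure_empty] at this

theorem measure_lt_top_of_memExh (μ : OuterMeasure ℕ) (hsing : ∀ n, μ {n} ≠ ⊤) {A : Set ℕ}
    (hA : MemExh μ A) : μ A < ⊤ := by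
  obtain ⟨N, hN⟩ := (memExh_iff_forall_exists_le (fun _ _ => measure_mono) A).mp hA 1 one_pos
  have hhead : μ (Iio N) < ⊤ := by
    have : Iio N = ⋃ n ∈ Finset.range N, ({n} : Set ℕ) := by ext; simp
    rw [this]
    exact (measure_biUnion_finset_le _ _).trans_lt
      (ENNReal.sum_lt_top.mpr fun n _ => (hsing n).lt_top)
  calc μ A ≤ μ (A ∩ Iio N) + μ (A \ Iio N) := measure_le_inter_add_sdiff μ A _
    _ ≤ μ (Iio N) + 1 := add_le_add (measure_mono inter_subset_right) hN
    _ < ⊤ := ENNReal.add_lt_top.mpr ⟨hhead, ENNReal.one_lt_top⟩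

theorem memExh_iUnion_of_tsum_ne_top (μ : OuterMeasure ℕ) {F : ℕ → Set ℕ} (hF : ∀ m, (F m).Finite)
    (hsum : ∑' m, μ (F m) ≠ ⊤) : MemExh μ (⋃ m, F m) := by
  refine (memExh_iff_forall_exists_le (fun _ _ => measure_mono) _).mpr fun ε hε => ?_
  obtain ⟨M, hM⟩ := ((ENNReal.tendsto_sum_nat_add _ hsum).eventually (ge_mem_nhds hε)).exists
  obtain ⟨b, hb⟩ := ((finite_lt_nat M).biUnion fun m _ => hF m).bddAbove
  refine ⟨b + 1, (measure_mono ?_).trans ((measure_iUnion_le _).trans hM)⟩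
  rintro n ⟨hn, hnb⟩
  obtain ⟨m, hm⟩ := mem_iUnion.mp hn
  have hMm : M ≤ m := by
    by_contra! hmM
    exact hnb (Nat.lt_succ_of_le (hb (mem_biUnion hmM hm)))
  exact mem_iUnion.mpr ⟨m - M, by rwa [Nat.sub_add_cancel hMm]⟩

theorem exists_forall_le_inv_two_pow_memExh (φ : Set ℕ → ℝ≥0∞)
    (hlsc : ∀ A : Set ℕ, φ A = ⨆ (F : Finset ℕ) (_ : ↑F ⊆ A), φ ↑F)
    (μ : OuterMeasure ℕ) (hμφ : ∀ A, MemExh μ A ↔ φ A < ⊤) :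
    ∃ m : ℕ, ∀ B, μ B ≤ 2⁻¹ ^ m → MemExh μ B := by
  -- Otherwise finite sets with `μ (F m) ≤ 2⁻ᵐ` and `φ (F m) > m` glue to a set in `Exh μ` whose
  -- `φ` is infinite.
  by_contra! hbad
  have hF : ∀ m : ℕ, ∃ F : Finset ℕ, μ F ≤ 2⁻¹ ^ m ∧ (m : ℝ≥0∞) < φ F := by
    intro m
    obtain ⟨B, hBμ, hB⟩ := hbad m
    have hφB : φ B = ⊤ := not_lt_top_iff.mp (mt (hμφ B).mpr hB)
    have hm : (m : ℝ≥0∞) < ⨆ (F : Finset ℕ) (_ : ↑F ⊆ B), φ ↑F := by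
      rw [← hlsc, hφB]
      exact ENNReal.natCast_lt_top m
    simp only [lt_iSup_iff] at hm
    obtain ⟨F, hFB, hF⟩ := hm
    exact ⟨F, (measure_mono hFB).trans hBμ, hF⟩
  choose F hFμ hFφ using hF
  have hsum : ∑' m, μ (F m) ≠ ⊤ :=
    ne_top_of_le_ne_top (by simp) (ENNReal.tsum_le_tsum hFμ)
  have hC := (hμφ _).mp (memExh_iUnion_of_tsum_ne_top μ (fun m => (F m).finite_toSet) hsum)
  obtain ⟨m, hm⟩ := ENNReal.exists_nat_gt hC.ne
  have hFC : φ (F m) ≤ φ (⋃ m, (F m : Set ℕ)) := by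
    rw [hlsc (⋃ m, (F m : Set ℕ))]
    exact le_iSup₂_of_le (F m) (subset_iUnion (fun m => (F m : Set ℕ)) m) le_rfl
  exact (hFφ m).not_ge (hFC.trans hm.le)

section PartialSums

variable {E : Type*} [NormedAddCommGroup E]

noncomputable def supPartialSumENorm (f : ℕ → E) (S : Set ℕ) : ℝ≥0∞ :=
  ⨆ (t : Finset ℕ) (_ : ↑t ⊆ S), ‖∑ n ∈ t, f n‖ₑ

theorem supPartialSumENorm_mono (f : ℕ → E) : Monotone (supPartialSumENorm f) :=
  fun _ _ hST => iSup₂_mono' fun t ht => ⟨t, ht.trans hST, le_rfl⟩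

theorem summable_subtype_iff_memExh [CompleteSpace E] (f : ℕ → E) (A : Set ℕ) :
    Summable (fun n : A => f n) ↔ MemExh (supPartialSumENorm f) A := by
  classical
  rw [summable_iff_vanishing_enorm]
  simp only [memExh_iff_forall_exists_le (supPartialSumENorm_mono f),
    supPartialSumENorm, iSup₂_le_iff]
  refine forall₂_congr fun ε _ => ⟨fun ⟨s, hs⟩ => ?_, fun ⟨N, hN⟩ => ?_⟩
  · refine ⟨s.sup (↑) + 1, fun t ht => ?_⟩
    have hA : ∀ n ∈ t, n ∈ A := fun n hn => (ht hn).1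
    have hdisj : Disjoint (t.subtype (· ∈ A)) s := by
      refine Finset.disjoint_left.mpr fun n hnt hns => ?_
      have hN := (ht (Finset.mem_subtype.mp hnt)).2
      have := Finset.le_sup (f := ((↑) : A → ℕ)) hns
      simp only [mem_Iio, not_lt] at hN
      omega
    simpa only [Finset.sum_subtype_of_mem f hA] using hs _ hdisj
  · refine ⟨(Finset.range N).subtype (· ∈ A), fun t ht => ?_⟩
    rw [← Finset.sum_subtype_map_embedding (g := f) fun _ _ => rfl]
    refine hN _ fun n hn => ?_
    obtain ⟨n, hnt, rfl⟩ := Finset.mem_map.mp hn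
    refine ⟨n.2, fun hlt => Finset.disjoint_left.mp ht hnt ?_⟩
    simpa using hlt

end PartialSums

section ColumnMeasures

variable (a : ℕ → ℕ → ℝ≥0∞)

noncomputable def colMeasure (k : ℕ) : Measure ℕ :=
  Measure.sum fun n => a n k • Measure.dirac n

noncomputable def supColMeasure : OuterMeasure ℕ :=
  ⨆ k, (colMeasure a k).toOuterMeasure

theorem colMeasure_apply (k : ℕ) (S : Set ℕ) : colMeasure a k S = ∑' n : S, a n k := by
  rw [colMeasure, Measure.sum_apply _ (.of_discrete), tsum_subtype S (a · k)]
  congr 1 with n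
  by_cases hn : n ∈ S <;> simp [hn]

theorem colMeasure_finset (k : ℕ) (F : Finset ℕ) : colMeasure a k F = ∑ n ∈ F, a n k := by
  rw [colMeasure_apply, Finset.tsum_subtype' F (a · k)]

theorem colMeasure_eq_iSup_finset (k : ℕ) (S : Set ℕ) :
    colMeasure a k S = ⨆ (F : Finset ℕ) (_ : ↑F ⊆ S), ∑ n ∈ F, a n k := by
  refine le_antisymm ?_ (iSup₂_le fun F hF => colMeasure_finset a k F ▸ measure_mono hF)
  rw [colMeasure_apply, ENNReal.tsum_eq_iSup_sum]
  refine iSup_le fun s => le_iSup₂_of_le (s.map (Function.Embedding.subtype _)) (by simp) ?_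
  rw [Finset.sum_map]
  rfl

theorem supColMeasure_apply (S : Set ℕ) : supColMeasure a S = ⨆ k, colMeasure a k S :=
  OuterMeasure.iSup_apply _ S

theorem colMeasure_le_supColMeasure (k : ℕ) (S : Set ℕ) : colMeasure a k S ≤ supColMeasure a S :=
  (supColMeasure_apply a S).symm ▸ le_iSup (fun k => colMeasure a k S) k

theorem supColMeasure_singleton (n : ℕ) : supColMeasure a {n} = ⨆ k, a n k := by
  simp only [supColMeasure_apply, colMeasure_apply]
  exact iSup_congr fun k => tsum_singleton n (a · k)

theorem tendsto_colMeasure_atTop_of_finite (hrow : ∀ n, Tendsto (a n) atTop (𝓝 0)) {S : Set ℕ}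
    (hS : S.Finite) : Tendsto (fun k => colMeasure a k S) atTop (𝓝 0) := by
  lift S to Finset ℕ using hS
  simp only [colMeasure_finset]
  simpa using tendsto_finsetSum S fun n _ => hrow n

theorem exists_strictMono_colMeasure_iUnion_le (hrow : ∀ n, Tendsto (a n) atTop (𝓝 0))
    {H : ℕ → Set ℕ} (hHfin : ∀ j, (H j).Finite)
    (hH : ∀ k, Tendsto (fun j => colMeasure a k (H j)) atTop (𝓝 0))
    {γ η : ℝ≥0∞} (hγ : ∀ j k, colMeasure a k (H j) ≤ γ) (hη : 0 < η) :
    ∃ sel : ℕ → ℕ, StrictMono sel ∧ ∀ k, colMeasure a k (⋃ r, H (sel r)) ≤ η + γ + 2 * η := by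
  have hstep : ∀ r i, ∃ j, i < j ∧ ∀ k, η < colMeasure a k (accumulate H i) →
      colMeasure a k (H j) ≤ 2⁻¹ ^ r * η := by
    -- Only finitely many columns are heavy on the finite set `accumulate H i`, and each of them
    -- is eventually light on `H j`.
    intro r i
    have hU : (accumulate H i).Finite := (finite_le_nat i).biUnion fun j _ => hHfin j
    obtain ⟨K, hK⟩ := eventually_atTop.mp
      ((tendsto_colMeasure_atTop_of_finite a hrow hU).eventually (ge_mem_nhds hη))
    have hpos : 0 < (2⁻¹ : ℝ≥0∞) ^ r * η := ENNReal.mul_pos (by simp) hη.ne'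
    have hsmall : ∀ᶠ j in atTop, ∀ k ∈ Iio K, colMeasure a k (H j) ≤ 2⁻¹ ^ r * η :=
      (eventually_all_finite (finite_Iio K)).mpr fun k _ => (hH k).eventually (ge_mem_nhds hpos)
    obtain ⟨j, hij, hj⟩ := ((eventually_gt_atTop i).and hsmall).exists
    exact ⟨j, hij, fun k hk => hj k (not_le.mp fun hKk => (hK k hKk).not_gt hk)⟩
  choose next hnext_gt hnext using hstep
  let sel : ℕ → ℕ := fun r => Nat.rec 0 next r
  have hsel : StrictMono sel := strictMono_nat_of_lt_succ fun r => hnext_gt r (sel r)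
  exact ⟨sel, hsel, fun k => measure_iUnion_le_of_forall_lt_imp_le (colMeasure a k)
    (monotone_accumulate.comp hsel.monotone) (fun r => subset_accumulate) (fun r => hγ _ k)
    fun r hr => hnext r (sel r) k hr⟩

theorem exists_finset_lt_supColMeasure_and_colMeasure_le {ε θ : ℝ≥0∞} (hθ : θ ≠ ⊤)
    {S : Set ℕ} (hS : ∀ n ∈ S, ∀ k, a n k ≤ θ) (hε : ε < supColMeasure a S) :
    ∃ H : Finset ℕ, ↑H ⊆ S ∧ ε < supColMeasure a H ∧ ∀ k, colMeasure a k H ≤ ε + θ := by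
  simp only [supColMeasure_apply, colMeasure_eq_iSup_finset, lt_iSup_iff] at hε
  obtain ⟨k, F, hFS, hF⟩ := hε
  obtain ⟨H, hHF, ⟨k', hk'⟩, hH⟩ :=
    F.exists_subset_lt_sum_and_forall_sum_le hθ (fun n hn => hS n (hFS hn)) ⟨k, hF⟩
  refine ⟨H, (Finset.coe_subset.2 hHF).trans hFS, ?_, fun k => colMeasure_finset a k H ▸ hH k⟩
  rw [← colMeasure_finset] at hk'
  exact hk'.trans_le (colMeasure_le_supColMeasure a k' H)

theorem memExh_supColMeasure_of_colMeasure_ne_top (hrow : ∀ n, Tendsto (a n) atTop (𝓝 0))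
    (hunif : Tendsto (fun n => ⨆ k, a n k) atTop (𝓝 0)) {δ : ℝ≥0∞} (hδ0 : 0 < δ) (hδ : δ ≠ ⊤)
    (hsmall : ∀ B, supColMeasure a B ≤ δ → MemExh (supColMeasure a) B) {A : Set ℕ}
    (hA : ∀ k, colMeasure a k A ≠ ⊤) : MemExh (supColMeasure a) A := by
  by_contra hnot
  obtain ⟨ε₀, hε₀, hε₀A⟩ := exists_pos_forall_lt_of_not_memExh (fun _ _ => measure_mono) hnot
  set θ := δ / 5
  have hθ0 : 0 < θ := ENNReal.div_pos hδ0.ne' (by norm_num)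
  have hθ : θ ≠ ⊤ := ENNReal.div_ne_top hδ (by norm_num)
  set ε := min ε₀ θ
  obtain ⟨m₀, hm₀⟩ := eventually_atTop.mp (hunif.eventually (ge_mem_nhds hθ0))
  have hblock : ∀ m, ∃ H : Finset ℕ, ↑H ⊆ A \ Iio (max m m₀) ∧ ε < supColMeasure a H ∧
      ∀ k, colMeasure a k H ≤ ε + θ := fun m =>
    exists_finset_lt_supColMeasure_and_colMeasure_le a hθ
      (fun n hn k => (le_iSup (a n) k).trans (hm₀ n ((le_max_right m m₀).trans (not_lt.mp hn.2))))
      ((min_le_left ε₀ θ).trans_lt (hε₀A _))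
  choose H hHA hHbig hHsmall using hblock
  have hHtail : ∀ m, (H m : Set ℕ) ⊆ A \ Iio m := fun m =>
    (hHA m).trans (sdiff_subset_sdiff_right (Iio_subset_Iio (le_max_left m m₀)))
  obtain ⟨sel, hsel, hC⟩ := exists_strictMono_colMeasure_iUnion_le a hrow
    (H := fun m => (H m : Set ℕ)) (fun m => (H m).finite_toSet)
    (fun k => tendsto_of_tendsto_of_tendsto_of_le_of_le tendsto_const_nhds
      (memExh_of_measure_ne_top _ (hA k)) (fun _ => zero_le) fun m => measure_mono (hHtail m))
    hHsmall hθ0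
  set C := ⋃ r, (H (sel r) : Set ℕ)
  have hCδ : supColMeasure a C ≤ δ := by
    rw [supColMeasure_apply]
    refine iSup_le fun k => (hC k).trans ?_
    calc θ + (ε + θ) + 2 * θ ≤ θ + (θ + θ) + 2 * θ := by gcongr; exact min_le_right _ _
      _ = 5 * θ := by ring
      _ = δ := ENNReal.mul_div_cancel' (by norm_num) (by norm_num)
  obtain ⟨N, hN⟩ := (memExh_iff_forall_exists_le (fun _ _ => measure_mono) C).mp (hsmall C hCδ) ε
    (lt_min hε₀ hθ0)
  have hHC : (H (sel N) : Set ℕ) ⊆ C \ Iio N := fun n hn =>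
    ⟨mem_iUnion.mpr ⟨N, hn⟩, fun hlt => (hHtail _ hn).2 (Iio_subset_Iio (hsel.id_le N) hlt)⟩
  exact hN.not_gt ((hHbig (sel N)).trans_le (measure_mono hHC))

noncomputable def rowWeight (n : ℕ) : ℝ≥0∞ := ∑' k, 2⁻¹ ^ k * a n k

theorem rowWeight_le (n : ℕ) : rowWeight a n ≤ 2 * ⨆ k, a n k :=
  calc rowWeight a n ≤ ∑' k, 2⁻¹ ^ k * ⨆ k, a n k :=
        ENNReal.tsum_le_tsum fun k => mul_le_mul_right (le_iSup (a n) k) _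
    _ = 2 * ⨆ k, a n k := by rw [ENNReal.tsum_mul_right, ENNReal.tsum_geometric_two]

theorem tsum_rowWeight (A : Set ℕ) :
    ∑' n : A, rowWeight a n = ∑' k, 2⁻¹ ^ k * colMeasure a k A := by
  simp_rw [rowWeight, colMeasure_apply, ← ENNReal.tsum_mul_left]
  exact ENNReal.tsum_comm

theorem tsum_rowWeight_lt_top_of_memExh (hsing : ∀ n, ⨆ k, a n k ≠ ⊤) {A : Set ℕ}
    (hA : MemExh (supColMeasure a) A) : ∑' n : A, rowWeight a n < ⊤ := by
  have hfin := measure_lt_top_of_memExh (supColMeasure a)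
    (fun n => (supColMeasure_singleton a n).trans_ne (hsing n)) hA
  rw [tsum_rowWeight]
  calc ∑' k, 2⁻¹ ^ k * colMeasure a k A ≤ ∑' k, 2⁻¹ ^ k * supColMeasure a A :=
        ENNReal.tsum_le_tsum fun k => mul_le_mul_right (colMeasure_le_supColMeasure a k A) _
    _ = 2 * supColMeasure a A := by rw [ENNReal.tsum_mul_right, ENNReal.tsum_geometric_two]
    _ < ⊤ := ENNReal.mul_lt_top (by norm_num) hfin

theorem colMeasure_ne_top_of_tsum_rowWeight_lt_top {A : Set ℕ}
    (hA : ∑' n : A, rowWeight a n < ⊤) (k : ℕ) : colMeasure a k A ≠ ⊤ := by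
  rw [tsum_rowWeight] at hA
  intro htop
  have := ENNReal.ne_top_of_tsum_ne_top hA.ne k
  rw [htop, ENNReal.mul_top (by simp)] at this
  exact this rfl

end ColumnMeasures

section CZero

variable (h : ℕ → C₀(ℕ, ℝ))

theorem supPartialSumENorm_le_supColMeasure (S : Set ℕ) :
    supPartialSumENorm h S ≤ supColMeasure (fun n k => ‖h n k‖ₑ) S := by
  refine iSup₂_le fun t ht => ?_
  calc ‖∑ n ∈ t, h n‖ₑ = ⨆ k, ‖∑ n ∈ t, h n k‖ₑ := by
        simp [ZeroAtInftyContinuousMap.enorm_eq_iSup_enorm,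
          ZeroAtInftyContinuousMap.finset_sum_apply]
    _ ≤ ⨆ k, colMeasure (fun n k => ‖h n k‖ₑ) k t := by
        simp only [colMeasure_finset]
        exact iSup_mono fun k => enorm_sum_le _ _
    _ ≤ supColMeasure (fun n k => ‖h n k‖ₑ) S := by
        rw [← supColMeasure_apply]
        exact measure_mono ht

theorem supColMeasure_le_two_mul_supPartialSumENorm (S : Set ℕ) :
    supColMeasure (fun n k => ‖h n k‖ₑ) S ≤ 2 * supPartialSumENorm h S := by
  rw [supColMeasure_apply]
  refine iSup_le fun k => ?_
  rw [colMeasure_eq_iSup_finset]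
  refine iSup₂_le fun t ht => sum_enorm_le_two_mul_of_forall_subset t _ fun u hu => ?_
  calc ‖∑ n ∈ u, h n k‖ₑ = ‖(∑ n ∈ u, h n) k‖ₑ := by
        rw [ZeroAtInftyContinuousMap.finset_sum_apply]
    _ ≤ ‖∑ n ∈ u, h n‖ₑ := by
        rw [ZeroAtInftyContinuousMap.enorm_eq_iSup_enorm]
        exact le_iSup (fun k => ‖(∑ n ∈ u, h n) k‖ₑ) k
    _ ≤ supPartialSumENorm h S := le_iSup₂_of_le u ((Finset.coe_subset.2 hu).trans ht) le_rfl

theorem summable_subtype_iff_memExh_supColMeasure (A : Set ℕ) :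
    Summable (fun n : A => h n) ↔ MemExh (supColMeasure fun n k => ‖h n k‖ₑ) A :=
  (summable_subtype_iff_memExh h A).trans <| memExh_congr_of_le (by norm_num)
    (supPartialSumENorm_le_supColMeasure h) (supColMeasure_le_two_mul_supPartialSumENorm h) A

end CZero

theorem stmt13_general (φ : Set ℕ → ENNReal)
    (hlsc : ∀ A : Set ℕ, φ A = ⨆ (F : Finset ℕ) (_ : ↑F ⊆ A), φ ↑F)
    (hExhFin : ∀ A : Set ℕ,
      Tendsto (fun N : ℕ => φ (A \ Set.Iio N)) atTop (𝓝 0) ↔ φ A < ⊤)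
    (htall : ∀ B : Set ℕ, B.Infinite →
      ∃ C : Set ℕ, C ⊆ B ∧ C.Infinite ∧
        Tendsto (fun N : ℕ => φ (C \ Set.Iio N)) atTop (𝓝 0))
    (hrep : ∃ h : ℕ → C₀(ℕ, ℝ), ∀ A : Set ℕ,
      Tendsto (fun N : ℕ => φ (A \ Set.Iio N)) atTop (𝓝 0) ↔
        Summable (fun n : A => h n)) :
    ∃ g : ℕ → ℝ, (∀ n : ℕ, 0 ≤ g n) ∧
      ∀ A : Set ℕ,
        Tendsto (fun N : ℕ => φ (A \ Set.Iio N)) atTop (𝓝 0) ↔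
          (∑' n : A, ENNReal.ofReal (g ↑n)) < ⊤ := by
  obtain ⟨h, hrep⟩ := hrep
  set a : ℕ → ℕ → ℝ≥0∞ := fun n k => ‖h n k‖ₑ
  have hJ : ∀ A, MemExh φ A ↔ MemExh (supColMeasure a) A := fun A =>
    (hrep A).trans (summable_subtype_iff_memExh_supColMeasure h A)
  have hrows : Tendsto h atTop (𝓝 0) :=
    tendsto_zero_of_forall_infinite_exists_summable fun B hB => by
      obtain ⟨C, hCB, hC, hCJ⟩ := htall B hB
      exact ⟨C, hCB, hC, (hrep C).mp hCJ⟩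
  have hsup : ∀ n, ⨆ k, a n k = ‖h n‖ₑ := fun n => (h n).enorm_eq_iSup_enorm.symm
  have hunif : Tendsto (fun n => ⨆ k, a n k) atTop (𝓝 0) := by
    simpa [hsup, ofReal_norm] using ENNReal.tendsto_ofReal hrows.norm
  obtain ⟨m, hm⟩ := exists_forall_le_inv_two_pow_memExh φ hlsc (supColMeasure a)
    fun A => (hJ A).symm.trans (hExhFin A)
  have hw : ∀ n, ENNReal.ofReal (rowWeight a n).toReal = rowWeight a n := fun n =>
    ENNReal.ofReal_toReal <| ne_top_of_le_ne_top
      (by rw [hsup]; exact ENNReal.mul_ne_top (by norm_num) enorm_ne_top) (rowWeight_le a n)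
  refine ⟨fun n => (rowWeight a n).toReal, fun n => ENNReal.toReal_nonneg, fun A => ?_⟩
  simp only [hw]
  refine (hJ A).trans ⟨tsum_rowWeight_lt_top_of_memExh a (fun n => by simp [hsup]), fun hA => ?_⟩
  exact memExh_supColMeasure_of_colMeasure_ne_top a (fun n => (h n).tendsto_enorm_atTop) hunif
    (ENNReal.pow_pos (by norm_num) m) (ENNReal.pow_ne_top (by norm_num)) hm
    (colMeasure_ne_top_of_tsum_rowWeight_lt_top a hA)

/-- a tall `F_σ` P-ideal (i.e. `J = Exh(φ) = Fin(φ)` for an lsc submeasure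
`φ`) which is representable in `c₀` is a summable ideal. -/
theorem stmt13 (φ : Set ℕ → ENNReal)
    (h0 : φ ∅ = 0)
    (hmono : ∀ A B : Set ℕ, A ⊆ B → φ A ≤ φ B)
    (hsub : ∀ A B : Set ℕ, φ (A ∪ B) ≤ φ A + φ B)
    (hsing : ∀ n : ℕ, φ {n} < ⊤)
    (hlsc : ∀ A : Set ℕ, φ A = ⨆ (F : Finset ℕ) (_ : ↑F ⊆ A), φ ↑F)
    (hExhFin : ∀ A : Set ℕ,
      Tendsto (fun N : ℕ => φ (A \ Set.Iio N)) atTop (𝓝 0) ↔ φ A < ⊤)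
    (htall : ∀ B : Set ℕ, B.Infinite →
      ∃ C : Set ℕ, C ⊆ B ∧ C.Infinite ∧
        Tendsto (fun N : ℕ => φ (C \ Set.Iio N)) atTop (𝓝 0))
    (hrep : ∃ h : ℕ → C₀(ℕ, ℝ), ∀ A : Set ℕ,
      Tendsto (fun N : ℕ => φ (A \ Set.Iio N)) atTop (𝓝 0) ↔
        Summable (fun n : A => h n)) :
    ∃ g : ℕ → ℝ, (∀ n : ℕ, 0 ≤ g n) ∧
      ∀ A : Set ℕ,
        Tendsto (fun N : ℕ => φ (A \ Set.Iio N)) atTop (𝓝 0) ↔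
          (∑' n : A, ENNReal.ofReal (g ↑n)) < ⊤ :=
  stmt13_general φ hlsc hExhFin htall hrep
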